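/- arXiv:1907.07413 — 2 statements merged into one kernel-verified Lean document; each statement's English description precedes it below -/
import Mathlib

section
/- Let a > 0 and t > a (the supercritical regime, r = 1). Then lim_{x → 0⁺} √x·ρ(x;1,t,a) = √(t−a)/(πt); in particular ρ(x;1,t,a) ≃ C₂(t,a)·x^{−1/2} as x → 0⁺ with C₂(t,a) = √(t−a)/(πt), and C₂(t,a) ≃ (1/(πa))·(t − a)^{1/2} as t → a⁺, i.e. lim_{t → a⁺} (t−a)^{−1/2}·√(t−a)/(πt) = 1/(πa). -/
open Filter Topology

/-- The real cube root. -/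
noncomputable def cbrt (y : ℝ) : ℝ :=
  if 0 ≤ y then y ^ ((1 : ℝ)/3) else -((-y) ^ ((1 : ℝ)/3))

/-- The cubic polynomial `S(x; r, t, a)`. -/
noncomputable def S (x r t a : ℝ) : ℝ :=
  4*a*x^3 - (8*a^2 + 4*a*(3*r+2)*t - t^2)*x^2
    + 2*(2*a^3 - 2*a^2*(5*r-2)*t + a*(r*(6*r-1)+1)*t^2 - (r+1)*t^3)*x
    + (r-1)^2*t^2*(a^2 - a*(4*r-2)*t + t^2)

/-- The function `g(x; r, t, a)`. -/
noncomputable def g (x r t a : ℝ) : ℝ :=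
  -2*x^3 + 3*((2*r+1)*t + 6*a)*x^2
    - 3*((r-1)*((2*r+1)*t - 3*a)*t - Real.sqrt (-3 * S x r t a))*x
    + 2*(r-1)^3*t^3

/-- The function `φ(x; r, t, a)`. -/
noncomputable def phi (x r t a : ℝ) : ℝ :=
  -(2/3)*(x - (r-1)*t)
    - (cbrt 2 / 3) * ((x^2 + (3*a - (2*r+1)*t)*x + (r-1)^2*t^2) / cbrt (g x r t a))
    - cbrt (g x r t a) / (3 * cbrt 2)

/-- The function `D(x; r, t, a) = -4aφ + (t-a)²`. -/
noncomputable def Df (x r t a : ℝ) : ℝ := -4*a*phi x r t a + (t-a)^2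

/-- The three-parametric Marcenko–Pastur density `ρ(x; r, t, a)`. -/
noncomputable def rho (x r t a : ℝ) : ℝ :=
  Real.sqrt (2*(t - a + Real.sqrt (Df x r t a))*x - (phi x r t a)^2)
    / (2*Real.pi*r*t*x)

/-- The real part `R(x; r, t, a)` of the boundary value of the Green's function. -/
noncomputable def Rf (x r t a : ℝ) : ℝ :=
  (2*x + (r-1)*t)/(3*r*t*x)
    - (x^2 + (3*a - (2*r+1)*t)*x + (r-1)^2*t^2) / (3 * (cbrt 2)^2 * r * t * cbrt (g x r t a) * x)
    - cbrt (g x r t a) / (6 * cbrt 2 * r * t * x)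

/-!
At `r = 1` the constant term of `S` vanishes, so `-3 S(x) ~ 12 (t-a)^3 x` and
`g(x) ~ 3 √(-3 S(x)) x ~ c³ x^{3/2}` with `c = 2^{1/3} √(3(t-a))`. Hence `g^{1/3} ~ c √x`, and
in `φ(x)/√x` the two leading terms `-2^{1/3}(x + 3(a-t))/(3 g^{1/3}/√x)` and
`-(g^{1/3}/√x)/(3·2^{1/3})` cancel in the limit because `c² = 2^{2/3}·3(t-a)`. So
`φ = o(√x)`, `D → (t-a)²`, and `√x ρ = √(2(t-a+√D) - (φ/√x)²)/(2πt) → √(4(t-a))/(2πt)`.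
-/

lemma cbrt_of_nonneg {y : ℝ} (hy : 0 ≤ y) : cbrt y = y ^ ((1 : ℝ) / 3) := if_pos hy

lemma cbrt_pos {y : ℝ} (hy : 0 < y) : 0 < cbrt y := by
  rw [cbrt_of_nonneg hy.le]
  exact Real.rpow_pos_of_pos hy _

lemma cbrt_pow_three {y : ℝ} (hy : 0 ≤ y) : cbrt y ^ 3 = y := by
  rw [cbrt_of_nonneg hy, ← Real.rpow_natCast, ← Real.rpow_mul hy]
  norm_num

lemma cbrt_pow_three_of_nonneg {p : ℝ} (hp : 0 ≤ p) : cbrt (p ^ 3) = p := by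
  rw [cbrt_of_nonneg (pow_nonneg hp 3), ← Real.rpow_natCast, ← Real.rpow_mul hp]
  norm_num

lemma cbrt_div {y z : ℝ} (hy : 0 ≤ y) (hz : 0 ≤ z) : cbrt (y / z) = cbrt y / cbrt z := by
  rw [cbrt_of_nonneg hy, cbrt_of_nonneg hz, cbrt_of_nonneg (div_nonneg hy hz),
    Real.div_rpow hy hz]

lemma continuousAt_cbrt {y : ℝ} (hy : 0 < y) : ContinuousAt cbrt y := by
  refine (Real.continuousAt_rpow_const y ((1 : ℝ) / 3) (Or.inl hy.ne')).congr ?_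
  filter_upwards [eventually_gt_nhds hy] with z hz
  exact (cbrt_of_nonneg hz.le).symm

lemma S_one (x t a : ℝ) :
    S x 1 t a = x * (4*a*x^2 - (8*a^2 + 20*a*t - t^2)*x + 4*(a-t)^3) := by
  simp only [S]; ring

lemma g_one (x t a : ℝ) :
    g x 1 t a = -2*x^3 + 9*(t + 2*a)*x^2 + 3*Real.sqrt (-3 * S x 1 t a)*x := by
  simp only [g]; ring

lemma phi_one_div_sqrt {x : ℝ} (t a : ℝ) (hx : 0 < x) :
    phi x 1 t a / Real.sqrt x = -(2/3) * Real.sqrt x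
      - cbrt 2 / 3 * ((x + 3*(a-t)) / (cbrt (g x 1 t a) / Real.sqrt x))
      - cbrt (g x 1 t a) / Real.sqrt x / (3 * cbrt 2) := by
  simp only [phi]
  set s := Real.sqrt x
  rw [← Real.mul_self_sqrt hx.le]
  field_simp
  ring

lemma sqrt_mul_rho {x : ℝ} (r t a : ℝ) (hx : 0 < x) :
    Real.sqrt x * rho x r t a
      = Real.sqrt (2*(t - a + Real.sqrt (Df x r t a)) - (phi x r t a / Real.sqrt x)^2)
        / (2*Real.pi*r*t) := by
  have hE : 2*(t - a + Real.sqrt (Df x r t a))*x - (phi x r t a)^2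
      = (2*(t - a + Real.sqrt (Df x r t a)) - (phi x r t a / Real.sqrt x)^2) * x := by
    rw [div_pow, Real.sq_sqrt hx.le, sub_mul, div_mul_cancel₀ _ hx.ne']
  rw [rho, hE, Real.sqrt_mul' _ hx.le, mul_div_assoc', mul_comm, mul_assoc,
    Real.mul_self_sqrt hx.le, mul_div_mul_right _ _ hx.ne']

lemma tendsto_sqrt_nhdsGT_zero : Tendsto Real.sqrt (𝓝[>] 0) (𝓝 0) :=
  tendsto_nhdsWithin_of_tendsto_nhds (Real.continuous_sqrt.tendsto' 0 0 Real.sqrt_zero)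

section Supercritical

variable {t a : ℝ}

lemma tendsto_sqrt_neg_three_mul_S_div (hat : a < t) :
    Tendsto (fun x => Real.sqrt (-3 * S x 1 t a / x)) (𝓝[>] 0)
      (𝓝 (2*(t-a) * Real.sqrt (3*(t-a)))) := by
  have hP : Tendsto (fun x : ℝ => -3 * (4*a*x^2 - (8*a^2 + 20*a*t - t^2)*x + 4*(a-t)^3))
      (𝓝[>] 0) (𝓝 ((2*(t-a))^2 * (3*(t-a)))) :=
    tendsto_nhdsWithin_of_tendsto_nhds ((by fun_prop : Continuous _).tendsto' 0 _ (by ring))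
  have hlim := (Real.continuous_sqrt.tendsto _).comp hP
  rw [Real.sqrt_mul' _ (by linarith), Real.sqrt_sq (by linarith)] at hlim
  refine hlim.congr' ?_
  filter_upwards [self_mem_nhdsWithin] with x (hx : 0 < x)
  rw [Function.comp_apply, S_one, mul_left_comm, mul_div_cancel_left₀ _ hx.ne']

lemma tendsto_g_div_sqrt_pow_three (hat : a < t) :
    Tendsto (fun x => g x 1 t a / Real.sqrt x ^ 3) (𝓝[>] 0)
      (𝓝 ((cbrt 2 * Real.sqrt (3*(t-a))) ^ 3)) := by
  have hlin : Tendsto (fun x : ℝ => -2*x + 9*(t + 2*a)) (𝓝[>] 0) (𝓝 (9*(t + 2*a))) :=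
    tendsto_nhdsWithin_of_tendsto_nhds ((by fun_prop : Continuous _).tendsto' 0 _ (by ring))
  have hlim := (tendsto_sqrt_nhdsGT_zero.mul hlin).add
    ((tendsto_sqrt_neg_three_mul_S_div hat).const_mul 3)
  have hc : (cbrt 2 * Real.sqrt (3*(t-a))) ^ 3
      = 0 * (9*(t + 2*a)) + 3 * (2*(t-a) * Real.sqrt (3*(t-a))) := by
    have h3 : Real.sqrt (3*(t-a)) ^ 2 = 3*(t-a) := Real.sq_sqrt (by linarith)
    rw [mul_pow, cbrt_pow_three zero_le_two, pow_succ, h3]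
    ring
  rw [hc]
  refine hlim.congr' ?_
  filter_upwards [self_mem_nhdsWithin] with x (hx : 0 < x)
  have hs : 0 < Real.sqrt x := Real.sqrt_pos.mpr hx
  rw [g_one, Real.sqrt_div' _ hx.le]
  set s := Real.sqrt x
  rw [← Real.mul_self_sqrt hx.le]
  field_simp
  ring

lemma tendsto_cbrt_g_div_sqrt (hat : a < t) :
    Tendsto (fun x => cbrt (g x 1 t a) / Real.sqrt x) (𝓝[>] 0)
      (𝓝 (cbrt 2 * Real.sqrt (3*(t-a)))) := by
  have hc : 0 < cbrt 2 * Real.sqrt (3*(t-a)) :=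
    mul_pos (cbrt_pos two_pos) (Real.sqrt_pos.mpr (by linarith))
  have hlim := tendsto_g_div_sqrt_pow_three hat
  have hg : ∀ᶠ x in 𝓝[>] 0, 0 < g x 1 t a := by
    filter_upwards [hlim.eventually (eventually_gt_nhds (pow_pos hc 3)), self_mem_nhdsWithin]
      with x hq (hx : 0 < x)
    exact (div_pos_iff_of_pos_right (pow_pos (Real.sqrt_pos.mpr hx) 3)).mp hq
  have hcomp := (continuousAt_cbrt (pow_pos hc 3)).tendsto.comp hlim
  rw [cbrt_pow_three_of_nonneg hc.le] at hcomp
  refine hcomp.congr' ?_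
  filter_upwards [hg] with x hgx
  rw [Function.comp_apply, cbrt_div hgx.le (pow_nonneg (Real.sqrt_nonneg x) 3),
    cbrt_pow_three_of_nonneg (Real.sqrt_nonneg x)]

lemma tendsto_phi_div_sqrt (hat : a < t) :
    Tendsto (fun x => phi x 1 t a / Real.sqrt x) (𝓝[>] 0) (𝓝 0) := by
  set c := cbrt 2 * Real.sqrt (3*(t-a))
  have h2 : 0 < cbrt 2 := cbrt_pos two_pos
  have hc : 0 < c := mul_pos h2 (Real.sqrt_pos.mpr (by linarith))
  have hx : Tendsto (fun x : ℝ => x + 3*(a-t)) (𝓝[>] 0) (𝓝 (0 + 3*(a-t))) :=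
    tendsto_nhdsWithin_of_tendsto_nhds ((continuous_add_const _).tendsto 0)
  have hu := tendsto_cbrt_g_div_sqrt hat
  have hlim := ((tendsto_sqrt_nhdsGT_zero.const_mul (-(2/3))).sub
    ((hx.div hu hc.ne').const_mul (cbrt 2 / 3))).sub (hu.div_const (3 * cbrt 2))
  have hzero : -(2/3) * 0 - cbrt 2 / 3 * ((0 + 3*(a-t)) / c) - c / (3 * cbrt 2) = 0 := by
    have hc2 : c ^ 2 = cbrt 2 ^ 2 * (3*(t-a)) := by
      rw [mul_pow, Real.sq_sqrt (by linarith)]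
    field_simp
    linear_combination -hc2
  rw [hzero] at hlim
  refine hlim.congr' ?_
  filter_upwards [self_mem_nhdsWithin] with x (hx : 0 < x)
  exact (phi_one_div_sqrt t a hx).symm

lemma tendsto_sqrt_Df (hat : a < t) :
    Tendsto (fun x => Real.sqrt (Df x 1 t a)) (𝓝[>] 0) (𝓝 (t-a)) := by
  have hphi : Tendsto (fun x => phi x 1 t a) (𝓝[>] 0) (𝓝 0) := by
    have h := (tendsto_phi_div_sqrt hat).mul tendsto_sqrt_nhdsGT_zero
    rw [zero_mul] at h
    refine h.congr' ?_
    filter_upwards [self_mem_nhdsWithin] with x (hx : 0 < x)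
    exact div_mul_cancel₀ _ (Real.sqrt_pos.mpr hx).ne'
  have hD := (Real.continuous_sqrt.tendsto _).comp ((hphi.const_mul (-4*a)).add_const ((t-a)^2))
  rwa [mul_zero, zero_add, Real.sqrt_sq (by linarith)] at hD

lemma tendsto_sqrt_mul_rho_one (hat : a < t) :
    Tendsto (fun x => Real.sqrt x * rho x 1 t a) (𝓝[>] 0)
      (𝓝 (Real.sqrt (t - a) / (Real.pi * t))) := by
  have hF := ((tendsto_sqrt_Df hat).const_add (t-a)).const_mul 2 |>.sub
    ((tendsto_phi_div_sqrt hat).pow 2)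
  have hlim := ((Real.continuous_sqrt.tendsto _).comp hF).div_const (2*Real.pi*1*t)
  have hval : Real.sqrt (2*(t-a + (t-a)) - 0^2) / (2*Real.pi*1*t)
      = Real.sqrt (t-a) / (Real.pi*t) := by
    rw [show 2*(t-a + (t-a)) - (0:ℝ)^2 = 2^2 * (t-a) by ring,
      Real.sqrt_mul' _ (by linarith), Real.sqrt_sq zero_le_two, mul_one, mul_assoc,
      mul_div_mul_left _ _ two_ne_zero]
  rw [hval] at hlim
  refine hlim.congr' ?_
  filter_upwards [self_mem_nhdsWithin] with x (hx : 0 < x)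
  exact (sqrt_mul_rho 1 t a hx).symm

end Supercritical

lemma rpow_neg_half_mul_sqrt {y : ℝ} (hy : 0 < y) : y ^ (-(1:ℝ)/2) * Real.sqrt y = 1 := by
  rw [Real.sqrt_eq_rpow, ← Real.rpow_add hy]
  norm_num

theorem stmt_15 (a : ℝ) (ha : 0 < a) :
    (∀ t : ℝ, a < t →
      Filter.Tendsto (fun x : ℝ => Real.sqrt x * rho x 1 t a)
        (nhdsWithin 0 (Set.Ioi 0))
        (nhds (Real.sqrt (t - a) / (Real.pi * t))))
    ∧ Filter.Tendsto (fun t : ℝ => (t - a) ^ (-(1:ℝ)/2) * (Real.sqrt (t - a) / (Real.pi * t)))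
        (nhdsWithin a (Set.Ioi a)) (nhds (1/(Real.pi * a))) := by
  refine ⟨fun t hat => tendsto_sqrt_mul_rho_one hat, ?_⟩
  have hcont : ContinuousAt (fun t : ℝ => 1 / (Real.pi * t)) a := by
    have := (mul_pos Real.pi_pos ha).ne'
    fun_prop (disch := assumption)
  refine (tendsto_nhdsWithin_of_tendsto_nhds hcont.tendsto).congr' ?_
  filter_upwards [self_mem_nhdsWithin] with t (hat : a < t)
  rw [← mul_div_assoc, rpow_neg_half_mul_sqrt (sub_pos.mpr hat)]
end

section
/- Let r ∈ (0,1], a ≥ 0, and fix x with (1−√r)² < x < (1+√r)². Then lim_{t → ∞} t·ρ(tx; r, t, a) = √((x − (1−√r)²)((1+√r)² − x))/(2πrx), i.e. in the long-term limit the suitably rescaled three-parametric Marcenko–Pastur density converges pointwise to the original Marcenko–Pastur density ρ(x;r). -/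
open Filter Topology

lemma cbrt_mul_of_nonneg {x : ℝ} (hx : 0 ≤ x) (y : ℝ) : cbrt (x * y) = cbrt x * cbrt y := by
  rcases le_or_gt 0 y with hy | hy
  · rw [cbrt_of_nonneg (mul_nonneg hx hy), cbrt_of_nonneg hx, cbrt_of_nonneg hy,
      Real.mul_rpow hx hy]
  rcases hx.eq_or_lt with rfl | hx
  · simp [cbrt]
  rw [cbrt, if_neg (mul_neg_of_pos_of_neg hx hy).not_ge, cbrt_of_nonneg hx.le, cbrt,
    if_neg hy.not_ge, ← mul_neg, Real.mul_rpow hx.le (neg_nonneg.2 hy.le), mul_neg]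

lemma cbrt_pow_three_s18 {t : ℝ} (ht : 0 ≤ t) : cbrt (t ^ 3) = t := by
  rw [cbrt_of_nonneg (by positivity), ← Real.rpow_natCast, ← Real.rpow_mul ht]
  norm_num

section Rescaling

variable (x r b : ℝ) {t : ℝ}

lemma S_mul_mul (t : ℝ) : S (t * x) r t (t * b) = t ^ 4 * S x r 1 b := by
  unfold S; ring

lemma g_mul_mul (t : ℝ) : g (t * x) r t (t * b) = t ^ 3 * g x r 1 b := by
  have hroot : √(-3 * S (t * x) r t (t * b)) = t ^ 2 * √(-3 * S x r 1 b) := by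
    rw [S_mul_mul, show -3 * (t ^ 4 * S x r 1 b) = (t ^ 2) ^ 2 * (-3 * S x r 1 b) by ring,
      Real.sqrt_mul (sq_nonneg _), Real.sqrt_sq (sq_nonneg t)]
  unfold g
  rw [hroot]
  ring

lemma phi_mul_mul (ht : 0 < t) : phi (t * x) r t (t * b) = t * phi x r 1 b := by
  have hquad : (t * x) ^ 2 + (3 * (t * b) - (2 * r + 1) * t) * (t * x) + (r - 1) ^ 2 * t ^ 2
      = t * (t * (x ^ 2 + (3 * b - (2 * r + 1) * 1) * x + (r - 1) ^ 2 * 1 ^ 2)) := by ring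
  unfold phi
  rw [g_mul_mul x r b t, cbrt_mul_of_nonneg (by positivity), cbrt_pow_three_s18 ht.le, hquad,
    mul_div_mul_left _ _ ht.ne']
  ring

lemma Df_mul_mul (ht : 0 < t) : Df (t * x) r t (t * b) = t ^ 2 * Df x r 1 b := by
  unfold Df; rw [phi_mul_mul x r b ht]; ring

lemma mul_rho_mul_mul (ht : 0 < t) : t * rho (t * x) r t (t * b) = rho x r 1 b := by
  have hsqrt (y : ℝ) : √(t ^ 2 * y) = t * √y := by
    rw [Real.sqrt_mul (sq_nonneg t), Real.sqrt_sq ht.le]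
  have hrad : 2 * (t - t * b + t * √(Df x r 1 b)) * (t * x) - (t * phi x r 1 b) ^ 2
      = t ^ 2 * (2 * (1 - b + √(Df x r 1 b)) * x - phi x r 1 b ^ 2) := by ring
  unfold rho
  rw [Df_mul_mul x r b ht, phi_mul_mul x r b ht, hsqrt, hrad, hsqrt, ← mul_div_assoc,
    show 2 * Real.pi * r * t * (t * x) = t * (t * (2 * Real.pi * r * 1 * x)) by ring,
    mul_div_mul_left _ _ ht.ne', mul_div_mul_left _ _ ht.ne']

end Rescaling

lemma continuousAt_rho_param {x r b₀ : ℝ} (hg : 0 < g x r 1 b₀) :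
    ContinuousAt (fun b => rho x r 1 b) b₀ := by
  have hcbrt_g : ContinuousAt (fun b => cbrt (g x r 1 b)) b₀ :=
    (continuousAt_cbrt hg).comp (by unfold g S; fun_prop)
  have hphi : ContinuousAt (fun b => phi x r 1 b) b₀ := by
    unfold phi
    have := (cbrt_pos hg).ne'
    fun_prop (disch := assumption)
  unfold rho Df
  fun_prop

section Unperturbed

variable {x r : ℝ}

lemma neg_three_mul_S_zero (hr : 0 ≤ r) :
    -3 * S x r 1 0 = 3 * ((x - (1 - √r) ^ 2) * ((1 + √r) ^ 2 - x)) := by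
  unfold S
  linear_combination (-(6 * x + 6 - 3 * √r ^ 2 - 3 * r)) * Real.sq_sqrt hr

lemma sq_sqrt_neg_three_mul_S_zero (hS : 0 ≤ -3 * S x r 1 0) :
    √(-3 * S x r 1 0) ^ 2 = -3 * (x ^ 2 - 2 * (r + 1) * x + (r - 1) ^ 2) := by
  rw [Real.sq_sqrt hS]; unfold S; ring

lemma neg_three_mul_S_zero_pos (hr : 0 ≤ r) (hx1 : (1 - √r) ^ 2 < x)
    (hx2 : x < (1 + √r) ^ 2) : 0 < -3 * S x r 1 0 := by
  rw [neg_three_mul_S_zero hr]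
  exact mul_pos three_pos (mul_pos (by linarith) (by linarith))

lemma g_zero_eq (hS : 0 ≤ -3 * S x r 1 0) :
    g x r 1 0 = 2 * ((x + 1 - r + √(-3 * S x r 1 0)) / 2) ^ 3 := by
  unfold g
  set B := √(-3 * S x r 1 0)
  have hB := sq_sqrt_neg_three_mul_S_zero hS
  linear_combination (-(B + 3 * (x + 1 - r)) / 4) * hB

lemma phi_zero_eq (hS : 0 ≤ -3 * S x r 1 0) (hu : 0 < x + 1 - r + √(-3 * S x r 1 0)) :
    phi x r 1 0 = -(x + 1 - r) := by
  have hc2 : 0 < cbrt 2 := cbrt_pos two_pos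
  unfold phi
  rw [g_zero_eq hS, cbrt_mul_of_nonneg zero_le_two, cbrt_pow_three_s18 (by positivity)]
  set B := √(-3 * S x r 1 0)
  have hB := sq_sqrt_neg_three_mul_S_zero hS
  have hquad : x ^ 2 + (3 * 0 - (2 * r + 1) * 1) * x + (r - 1) ^ 2 * 1 ^ 2
      = (x + 1 - r) * ((x + 1 - r + B) / 2) - ((x + 1 - r + B) / 2) ^ 2 := by
    linear_combination (1 / 4 : ℝ) * hB
  rw [hquad]
  field_simp
  ring

lemma rho_zero_eq (hr : 0 < r) (hr1 : r ≤ 1) (hx1 : (1 - √r) ^ 2 < x)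
    (hx2 : x < (1 + √r) ^ 2) :
    rho x r 1 0 = √((x - (1 - √r) ^ 2) * ((1 + √r) ^ 2 - x)) / (2 * Real.pi * r * x) := by
  have hS := (neg_three_mul_S_zero_pos hr.le hx1 hx2).le
  have hA : 0 < x + 1 - r := by nlinarith [sq_nonneg (1 - √r)]
  have hphi := phi_zero_eq hS (by positivity)
  have hD : Df x r 1 0 = 1 := by unfold Df; ring
  unfold rho
  rw [hD, Real.sqrt_one, hphi, mul_one]
  congr 2
  linear_combination (-(2 * x + 2 - r - √r ^ 2)) * Real.sq_sqrt hr.le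

lemma g_zero_pos (hr : 0 < r) (hr1 : r ≤ 1) (hx1 : (1 - √r) ^ 2 < x)
    (hx2 : x < (1 + √r) ^ 2) : 0 < g x r 1 0 := by
  have hS := neg_three_mul_S_zero_pos hr.le hx1 hx2
  have hA : 0 < x + 1 - r := by nlinarith [sq_nonneg (1 - √r)]
  rw [g_zero_eq hS.le]
  positivity

end Unperturbed

theorem stmt_18_general (r a x : ℝ) (hr : 0 < r) (hr1 : r ≤ 1)
    (hx1 : (1 - Real.sqrt r)^2 < x) (hx2 : x < (1 + Real.sqrt r)^2) :
    Filter.Tendsto (fun t : ℝ => t * rho (t*x) r t a) Filter.atTop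
      (nhds (Real.sqrt ((x - (1 - Real.sqrt r)^2) * ((1 + Real.sqrt r)^2 - x))
        / (2*Real.pi*r*x))) := by
  have hparam : Tendsto (fun t : ℝ => a / t) atTop (𝓝 0) :=
    tendsto_const_nhds.div_atTop tendsto_id
  have hlim := (continuousAt_rho_param (g_zero_pos hr hr1 hx1 hx2)).tendsto.comp hparam
  rw [rho_zero_eq hr hr1 hx1 hx2] at hlim
  refine hlim.congr' ?_
  filter_upwards [eventually_gt_atTop 0] with t ht
  simpa only [Function.comp_apply, mul_div_cancel₀ a ht.ne'] using
    (mul_rho_mul_mul x r (a / t) ht).symm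

theorem stmt_18 (r a x : ℝ) (hr : 0 < r) (hr1 : r ≤ 1) (ha : 0 ≤ a)
    (hx1 : (1 - Real.sqrt r)^2 < x) (hx2 : x < (1 + Real.sqrt r)^2) :
    Filter.Tendsto (fun t : ℝ => t * rho (t*x) r t a) Filter.atTop
      (nhds (Real.sqrt ((x - (1 - Real.sqrt r)^2) * ((1 + Real.sqrt r)^2 - x))
        / (2*Real.pi*r*x))) :=
  stmt_18_general r a x hr hr1 hx1 hx2
end
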